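/- Let S ⊆ [m] × [n] be a finite set, and let Level : Max(S) → ℕ be a function such that whenever E covers D in the partial order P_S (that is, D < E and there is no F ∈ Max(S) with D < F < E), one has Level(E) = Level(D) + 1. Let x ∈ [m] and let D_1, D_2 ∈ Max(S) with x ∈ rows(D_1), x ∈ rows(D_2), and Level(D_1) = r < s = Level(D_2). Then for every integer i with r ≤ i ≤ s there exists D ∈ Max(S) with x ∈ rows(D) and Level(D) = i. -/
import Mathlib


/-- A clique in `S ⊆ [m] × [n]` is a nonempty subset of `S` of the form `R × C`. -/
def IsCliqueIn {m n : ℕ} (S D : Finset (Fin m × Fin n)) : Prop :=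
  D.Nonempty ∧ D ⊆ S ∧ ∃ (R : Finset (Fin m)) (C : Finset (Fin n)), D = R ×ˢ C

/-- A maximal clique of `S`, i.e. an element of `Max(S)`. -/
def IsMaxCliqueIn {m n : ℕ} (S D : Finset (Fin m × Fin n)) : Prop :=
  IsCliqueIn S D ∧ ∀ E, IsCliqueIn S E → D ⊆ E → D = E

/-- The row set of a clique. -/
def rowsOf {m n : ℕ} (D : Finset (Fin m × Fin n)) : Finset (Fin m) := D.image Prod.fst

namespace Stmt8Aux

open Finset

variable {m n : ℕ}

/-- The column set of a clique. -/
def colsOf (D : Finset (Fin m × Fin n)) : Finset (Fin n) := D.image Prod.snd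

lemma rows_product {R : Finset (Fin m)} {C : Finset (Fin n)} (hC : C.Nonempty) :
    rowsOf (R ×ˢ C) = R := by
  ext a
  simp only [rowsOf, mem_image, mem_product, Prod.exists]
  constructor
  · rintro ⟨b, c, ⟨hb, _⟩, rfl⟩; exact hb
  · rintro ha; obtain ⟨c, hc⟩ := hC; exact ⟨a, c, ⟨ha, hc⟩, rfl⟩

lemma cols_product {R : Finset (Fin m)} {C : Finset (Fin n)} (hR : R.Nonempty) :
    colsOf (R ×ˢ C) = C := by
  ext c
  simp only [colsOf, mem_image, mem_product, Prod.exists]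
  constructor
  · rintro ⟨b, c', ⟨_, hc⟩, rfl⟩; exact hc
  · rintro hc; obtain ⟨a, ha⟩ := hR; exact ⟨a, c, ⟨ha, hc⟩, rfl⟩

/-- Structure of a clique: it equals its row set times its column set. -/
lemma clique_struct {S D : Finset (Fin m × Fin n)} (h : IsCliqueIn S D) :
    D = rowsOf D ×ˢ colsOf D ∧ (rowsOf D).Nonempty ∧ (colsOf D).Nonempty := by
  obtain ⟨hne, hsub, R, C, rfl⟩ := h
  obtain ⟨hR, hC⟩ := Finset.nonempty_product.mp hne
  rw [rows_product hC, cols_product hR]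
  exact ⟨rfl, hR, hC⟩

/-- If every column of a maximal clique `A` can be extended by row `a` within `S`,
then `a` already belongs to the rows of `A`. -/
lemma mem_rows_of_max {S A : Finset (Fin m × Fin n)} (hA : IsMaxCliqueIn S A)
    (a : Fin m) (ha : ∀ c ∈ colsOf A, (a, c) ∈ S) : a ∈ rowsOf A := by
  obtain ⟨hAeq, hRne, hCne⟩ := clique_struct hA.1
  set R := rowsOf A with hR
  set C := colsOf A with hC
  have hclique : IsCliqueIn S ((insert a R) ×ˢ C) := by
    refine ⟨?_, ?_, insert a R, C, rfl⟩
    · exact Finset.nonempty_product.mpr ⟨⟨a, mem_insert_self a R⟩, hCne⟩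
    · intro p hp
      rw [mem_product] at hp
      rcases mem_insert.mp hp.1 with h1 | h1
      · have := ha p.2 hp.2
        rwa [← h1, Prod.mk.eta] at this
      · have : p ∈ A := by
          rw [hAeq, mem_product]; exact ⟨h1, hp.2⟩
        exact hA.1.2.1 this
  have hsub : A ⊆ (insert a R) ×ˢ C := by
    intro p hp
    rw [hAeq, mem_product] at hp
    rw [mem_product]
    exact ⟨mem_insert_of_mem hp.1, hp.2⟩
  have heq := hA.2 _ hclique hsub
  obtain ⟨c, hc⟩ := hCne
  have : (a, c) ∈ A := by
    rw [heq, mem_product]; exact ⟨mem_insert_self a R, hc⟩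
  exact mem_image_of_mem Prod.fst this

/-- A maximal clique is determined by its row set. -/
lemma max_clique_eq_of_rows_eq {S A B : Finset (Fin m × Fin n)}
    (hA : IsMaxCliqueIn S A) (hB : IsMaxCliqueIn S B)
    (h : rowsOf A = rowsOf B) : A = B := by
  obtain ⟨hAeq, hARne, hACne⟩ := clique_struct hA.1
  obtain ⟨hBeq, hBRne, hBCne⟩ := clique_struct hB.1
  have hUclique : IsCliqueIn S (rowsOf A ×ˢ (colsOf A ∪ colsOf B)) := by
    refine ⟨?_, ?_, _, _, rfl⟩
    · exact Finset.nonempty_product.mpr ⟨hARne, hACne.mono subset_union_left⟩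
    · intro p hp
      rw [mem_product, mem_union] at hp
      rcases hp.2 with h2 | h2
      · have : p ∈ A := by rw [hAeq, mem_product]; exact ⟨hp.1, h2⟩
        exact hA.1.2.1 this
      · have : p ∈ B := by rw [hBeq, mem_product]; exact ⟨h ▸ hp.1, h2⟩
        exact hB.1.2.1 this
  have hAs : A ⊆ rowsOf A ×ˢ (colsOf A ∪ colsOf B) := by
    intro p hp; rw [hAeq, mem_product] at hp
    rw [mem_product]; exact ⟨hp.1, mem_union_left _ hp.2⟩
  have hBs : B ⊆ rowsOf A ×ˢ (colsOf A ∪ colsOf B) := by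
    intro p hp; rw [hBeq, mem_product] at hp
    rw [mem_product]; exact ⟨h ▸ hp.1, mem_union_right _ hp.2⟩
  exact (hA.2 _ hUclique hAs).trans (hB.2 _ hUclique hBs).symm

/-- Every clique extends to a maximal clique. -/
lemma exists_max_extension {S E : Finset (Fin m × Fin n)} (hE : IsCliqueIn S E) :
    ∃ D, IsMaxCliqueIn S D ∧ E ⊆ D := by
  classical
  set T : Finset (Finset (Fin m × Fin n)) :=
    Finset.univ.filter (fun D => IsCliqueIn S D ∧ E ⊆ D) with hT
  have hET : E ∈ T := by simp [hT, hE]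
  obtain ⟨D, hDT, hDmax⟩ := T.exists_max_image (fun D => D.card) ⟨E, hET⟩
  simp only [hT, mem_filter, mem_univ, true_and] at hDT hDmax
  refine ⟨D, ⟨hDT.1, ?_⟩, hDT.2⟩
  intro E' hE' hsub
  have hE'T : IsCliqueIn S E' ∧ E ⊆ E' := ⟨hE', hDT.2.trans hsub⟩
  exact Finset.eq_of_subset_of_card_le hsub (hDmax E' hE'T)

/-- Below any maximal clique `B` strictly above `A`, there is a maximal clique `F`
above `A` that is covered by `B`. -/
lemma exists_cover {S A B : Finset (Fin m × Fin n)}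
    (hA : IsMaxCliqueIn S A) (hB : IsMaxCliqueIn S B)
    (hAB : rowsOf A ⊂ rowsOf B) :
    ∃ F, IsMaxCliqueIn S F ∧ rowsOf A ⊆ rowsOf F ∧ rowsOf F ⊂ rowsOf B ∧
      ¬ ∃ G, IsMaxCliqueIn S G ∧ rowsOf F ⊂ rowsOf G ∧ rowsOf G ⊂ rowsOf B := by
  classical
  set T : Finset (Finset (Fin m × Fin n)) :=
    Finset.univ.filter
      (fun G => IsMaxCliqueIn S G ∧ rowsOf A ⊆ rowsOf G ∧ rowsOf G ⊂ rowsOf B) with hT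
  have hAT : A ∈ T := by simp [hT, hA, hAB]
  obtain ⟨F, hFT, hFmax⟩ := T.exists_max_image (fun G => (rowsOf G).card) ⟨A, hAT⟩
  simp only [hT, mem_filter, mem_univ, true_and] at hFT hFmax
  refine ⟨F, hFT.1, hFT.2.1, hFT.2.2, ?_⟩
  rintro ⟨G, hG, hFG, hGB⟩
  have hGT : IsMaxCliqueIn S G ∧ rowsOf A ⊆ rowsOf G ∧ rowsOf G ⊂ rowsOf B :=
    ⟨hG, hFT.2.1.trans hFG.subset, hGB⟩
  have := hFmax G hGT
  exact absurd (Finset.card_lt_card hFG) (not_lt.mpr this)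

section Level

variable {S : Finset (Fin m × Fin n)} {Level : Finset (Fin m × Fin n) → ℕ}

variable (hLevel : ∀ D E, IsMaxCliqueIn S D → IsMaxCliqueIn S E → rowsOf D ⊂ rowsOf E →
      (¬ ∃ F, IsMaxCliqueIn S F ∧ rowsOf D ⊂ rowsOf F ∧ rowsOf F ⊂ rowsOf E) →
      Level E = Level D + 1)

include hLevel

/-- Level is monotone along the row-set order. -/
lemma level_mono : ∀ k A B, IsMaxCliqueIn S A → IsMaxCliqueIn S B →
    rowsOf A ⊆ rowsOf B → (rowsOf B \ rowsOf A).card ≤ k → Level A ≤ Level B := by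
  intro k
  induction k with
  | zero =>
    intro A B hA hB hsub hcard
    have : rowsOf B ⊆ rowsOf A :=
      Finset.sdiff_eq_empty_iff_subset.mp (Finset.card_eq_zero.mp (Nat.le_zero.mp hcard))
    rw [max_clique_eq_of_rows_eq hA hB (Finset.Subset.antisymm hsub this)]
  | succ k ih =>
    intro A B hA hB hsub hcard
    rcases eq_or_ne (rowsOf A) (rowsOf B) with heq | hne
    · rw [max_clique_eq_of_rows_eq hA hB heq]
    · have hss : rowsOf A ⊂ rowsOf B := ⟨hsub, fun h => hne (Finset.Subset.antisymm hsub h)⟩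
      obtain ⟨F, hF, hAF, hFB, hcov⟩ := exists_cover hA hB hss
      have hlev := hLevel F B hF hB hFB hcov
      have hdss : rowsOf F \ rowsOf A ⊂ rowsOf B \ rowsOf A := by
        refine ⟨Finset.sdiff_subset_sdiff hFB.subset (le_refl _), ?_⟩
        intro h
        obtain ⟨y, hyB, hyF⟩ := Finset.exists_of_ssubset hFB
        have : y ∈ rowsOf F \ rowsOf A := h (Finset.mem_sdiff.mpr ⟨hyB, fun hy => hyF (hAF hy)⟩)
        exact hyF (Finset.mem_sdiff.mp this).1
      have : (rowsOf F \ rowsOf A).card ≤ k := by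
        have := Finset.card_lt_card hdss
        omega
      have := ih A F hA hF hAF this
      omega

/-- Main interval lemma: every level between `Level A` and `Level B` is attained
by a maximal clique whose rows contain those of `A`. -/
lemma interval : ∀ k A B, IsMaxCliqueIn S A → IsMaxCliqueIn S B →
    rowsOf A ⊆ rowsOf B → (rowsOf B \ rowsOf A).card ≤ k →
    ∀ i, Level A ≤ i → i ≤ Level B →
    ∃ D, IsMaxCliqueIn S D ∧ rowsOf A ⊆ rowsOf D ∧ Level D = i := by
  intro k
  induction k with
  | zero =>
    intro A B hA hB hsub hcard i hi₁ hi₂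
    have hBA : rowsOf B ⊆ rowsOf A :=
      Finset.sdiff_eq_empty_iff_subset.mp (Finset.card_eq_zero.mp (Nat.le_zero.mp hcard))
    have hAB : A = B := max_clique_eq_of_rows_eq hA hB (Finset.Subset.antisymm hsub hBA)
    subst hAB
    exact ⟨A, hA, le_refl _, by omega⟩
  | succ k ih =>
    intro A B hA hB hsub hcard i hi₁ hi₂
    rcases eq_or_ne (rowsOf A) (rowsOf B) with heq | hne
    · have hAB : A = B := max_clique_eq_of_rows_eq hA hB heq
      subst hAB
      exact ⟨A, hA, le_refl _, by omega⟩
    · have hss : rowsOf A ⊂ rowsOf B := ⟨hsub, fun h => hne (Finset.Subset.antisymm hsub h)⟩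
      obtain ⟨F, hF, hAF, hFB, hcov⟩ := exists_cover hA hB hss
      have hlev := hLevel F B hF hB hFB hcov
      have hdss : rowsOf F \ rowsOf A ⊂ rowsOf B \ rowsOf A := by
        refine ⟨Finset.sdiff_subset_sdiff hFB.subset (le_refl _), ?_⟩
        intro h
        obtain ⟨y, hyB, hyF⟩ := Finset.exists_of_ssubset hFB
        have : y ∈ rowsOf F \ rowsOf A := h (Finset.mem_sdiff.mpr ⟨hyB, fun hy => hyF (hAF hy)⟩)
        exact hyF (Finset.mem_sdiff.mp this).1
      have hk : (rowsOf F \ rowsOf A).card ≤ k := by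
        have := Finset.card_lt_card hdss
        omega
      rcases le_or_gt i (Level F) with hiF | hiF
      · exact ih A F hA hF hAF hk i hi₁ hiF
      · have : i = Level B := by omega
        exact ⟨B, hB, hsub, this.symm⟩

end Level

end Stmt8Aux

open Stmt8Aux Finset in
/-- Suppose `Level : Max(S) → ℕ` satisfies `Level(E) = Level(D) + 1` whenever
`E` covers `D` in the partial order `P_S` (ordering maximal cliques by inclusion of row sets).
If `x ∈ rows(D₁) ∩ rows(D₂)` with `Level(D₁) = r < s = Level(D₂)`, then for every `i` with
`r ≤ i ≤ s` there is a maximal clique `D` with `x ∈ rows(D)` and `Level(D) = i`. -/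
theorem stmt8 {m n : ℕ} (S : Finset (Fin m × Fin n))
    (Level : Finset (Fin m × Fin n) → ℕ)
    (hLevel : ∀ D E, IsMaxCliqueIn S D → IsMaxCliqueIn S E → rowsOf D ⊂ rowsOf E →
      (¬ ∃ F, IsMaxCliqueIn S F ∧ rowsOf D ⊂ rowsOf F ∧ rowsOf F ⊂ rowsOf E) →
      Level E = Level D + 1)
    (x : Fin m) (D₁ D₂ : Finset (Fin m × Fin n))
    (hD₁ : IsMaxCliqueIn S D₁) (hD₂ : IsMaxCliqueIn S D₂)
    (hx₁ : x ∈ rowsOf D₁) (hx₂ : x ∈ rowsOf D₂)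
    (r s : ℕ) (hr : Level D₁ = r) (hs : Level D₂ = s) (hrs : r < s) :
    ∀ i : ℕ, r ≤ i → i ≤ s → ∃ D, IsMaxCliqueIn S D ∧ x ∈ rowsOf D ∧ Level D = i := by
  classical
  intro i hi₁ hi₂
  obtain ⟨hD₁eq, hR₁ne, hC₁ne⟩ := clique_struct hD₁.1
  obtain ⟨hD₂eq, hR₂ne, hC₂ne⟩ := clique_struct hD₂.1
  -- The meet candidate: (R₁ ∩ R₂) × (C₁ ∪ C₂)
  have hmeet : IsCliqueIn S ((rowsOf D₁ ∩ rowsOf D₂) ×ˢ (colsOf D₁ ∪ colsOf D₂)) := by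
    refine ⟨?_, ?_, _, _, rfl⟩
    · exact Finset.nonempty_product.mpr
        ⟨⟨x, mem_inter.mpr ⟨hx₁, hx₂⟩⟩, hC₁ne.mono subset_union_left⟩
    · intro p hp
      rw [mem_product, mem_inter, mem_union] at hp
      rcases hp.2 with h2 | h2
      · have : p ∈ D₁ := by rw [hD₁eq, mem_product]; exact ⟨hp.1.1, h2⟩
        exact hD₁.1.2.1 this
      · have : p ∈ D₂ := by rw [hD₂eq, mem_product]; exact ⟨hp.1.2, h2⟩
        exact hD₂.1.2.1 this
  obtain ⟨D₀, hD₀, hsub₀⟩ := exists_max_extension hmeet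
  -- x is among the rows of D₀
  obtain ⟨c₁, hc₁⟩ := hC₁ne
  have hx₀ : x ∈ rowsOf D₀ := by
    have : (x, c₁) ∈ D₀ := hsub₀ (by
      rw [mem_product, mem_inter, mem_union]
      exact ⟨⟨hx₁, hx₂⟩, Or.inl hc₁⟩)
    exact mem_image_of_mem Prod.fst this
  -- Columns of D₀ contain all columns of D₁ and D₂
  have hcols : colsOf D₁ ∪ colsOf D₂ ⊆ colsOf D₀ := by
    intro c hc
    obtain ⟨a, ha⟩ : (rowsOf D₁ ∩ rowsOf D₂).Nonempty := ⟨x, mem_inter.mpr ⟨hx₁, hx₂⟩⟩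
    have : (a, c) ∈ D₀ := hsub₀ (by rw [mem_product]; exact ⟨ha, hc⟩)
    exact mem_image_of_mem Prod.snd this
  obtain ⟨hD₀eq, hR₀ne, hC₀ne⟩ := clique_struct hD₀.1
  -- rows D₀ ⊆ rows D₁ and rows D₀ ⊆ rows D₂
  have hrow : ∀ (D : Finset (Fin m × Fin n)), IsMaxCliqueIn S D →
      D = rowsOf D ×ˢ colsOf D → colsOf D ⊆ colsOf D₀ → rowsOf D₀ ⊆ rowsOf D := by
    intro D hD hDeq hcolsD
    intro a ha
    refine mem_rows_of_max hD a (fun c hc => ?_)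
    have : (a, c) ∈ D₀ := by
      rw [hD₀eq, mem_product]; exact ⟨ha, hcolsD hc⟩
    exact hD₀.1.2.1 this
  have h01 : rowsOf D₀ ⊆ rowsOf D₁ :=
    hrow D₁ hD₁ hD₁eq ((subset_union_left).trans hcols)
  have h02 : rowsOf D₀ ⊆ rowsOf D₂ :=
    hrow D₂ hD₂ hD₂eq ((subset_union_right).trans hcols)
  -- Level D₀ ≤ r
  have hL0 : Level D₀ ≤ r := by
    have := level_mono hLevel (rowsOf D₁ \ rowsOf D₀).card D₀ D₁ hD₀ hD₁ h01 (le_refl _)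
    omega
  -- Apply the interval lemma between D₀ and D₂
  obtain ⟨D, hD, hDsub, hDlev⟩ := interval hLevel (rowsOf D₂ \ rowsOf D₀).card D₀ D₂ hD₀ hD₂
    h02 (le_refl _) i (by omega) (by omega)
  exact ⟨D, hD, hDsub hx₀, hDlev⟩
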